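/- arXiv:2309.10760 — 2 statements merged into one kernel-verified Lean document; each statement's English description precedes it below -/
import Mathlib

section
/- Let X be a complete connected median space of rank n and let a, b ∈ X with a ≠ b. Then there exists a halfspace h of X with b ∈ h and a ∈ hᶜ such that d(a, h) = 0 and d(b, hᶜ) ≥ d(a,b)/n. -/
/-- The interval `[a,b]` in a metric space: points `x` with `d(a,x) + d(x,b) = d(a,b)`. -/
def mInterval {X : Type*} [MetricSpace X] (a b : X) : Set X :=
  {x : X | dist a x + dist x b = dist a b}

/-- A median space: every triple of points has a unique median point. -/
def IsMedianSpace (X : Type*) [MetricSpace X] : Prop :=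
  ∀ a b c : X, ∃! m : X,
    m ∈ mInterval a b ∩ mInterval b c ∩ mInterval a c

/-- A subset is (median) convex if it contains the interval between any two of its points. -/
def MConvex {X : Type*} [MetricSpace X] (C : Set X) : Prop :=
  ∀ a ∈ C, ∀ b ∈ C, mInterval a b ⊆ C

/-- A halfspace: a convex subset with convex complement. -/
def IsHalfspace {X : Type*} [MetricSpace X] (h : Set X) : Prop :=
  MConvex h ∧ MConvex hᶜ

/-- Two subsets are transverse if the four pairwise intersections of them and
their complements are all nonempty. -/
def TransverseSets {X : Type*} (h₁ h₂ : Set X) : Prop :=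
  (h₁ ∩ h₂).Nonempty ∧ (h₁ᶜ ∩ h₂).Nonempty ∧ (h₁ ∩ h₂ᶜ).Nonempty ∧ (h₁ᶜ ∩ h₂ᶜ).Nonempty

/-- `X` has rank `n`: there are `n` pairwise transverse halfspaces but not `n+1`. -/
def HasMedianRank (X : Type*) [MetricSpace X] (n : ℕ) : Prop :=
  (∃ h : Fin n → Set X, (∀ i, IsHalfspace (h i)) ∧
    ∀ i j, i ≠ j → TransverseSets (h i) (h j)) ∧
  ¬ ∃ h : Fin (n + 1) → Set X, (∀ i, IsHalfspace (h i)) ∧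
    ∀ i j, i ≠ j → TransverseSets (h i) (h j)

/-- Median convex hull: intersection of all convex subsets containing `A`. -/
def mConvexHull {X : Type*} [MetricSpace X] (A : Set X) : Set X :=
  ⋂₀ {C : Set X | MConvex C ∧ A ⊆ C}

/-- The hyperplane bounding a halfspace `h`. -/
def mHyperplane {X : Type*} [MetricSpace X] (h : Set X) : Set X :=
  closure h ∩ closure hᶜ

/-- Depth of the halfspace `h` in the subset `A`:
`sup { d(x, ĥ) | x ∈ h ∩ A }`. -/
noncomputable def mDepth {X : Type*} [MetricSpace X] (A h : Set X) : ℝ :=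
  sSup ((fun x => Metric.infDist x (mHyperplane h)) '' (h ∩ A))

/-- `π` is the nearest-point projection onto `C`. -/
def IsNearestPointProj {X : Type*} [MetricSpace X] (C : Set X) (π : X → X) : Prop :=
  ∀ x : X, π x ∈ C ∧ dist x (π x) = Metric.infDist x C

/-- The halfspace `h` separates the points `x` and `y`. -/
def SeparatesPts {X : Type*} (h : Set X) (x y : X) : Prop :=
  (x ∈ h ∧ y ∈ hᶜ) ∨ (y ∈ h ∧ x ∈ hᶜ)


/-! Suppose every halfspace `h` with `b ∈ h`, `a ∉ h`, `d(a, h) = 0` had `d(b, hᶜ) < d(a,b)/n`.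
Starting from `C = {b}`, enlarge `C` by Zorn to a maximal convex set `h` avoiding `a`; it is a
halfspace, and completeness and connectedness make it touch `a`. Leave `h` by a step of length
`< d(a,b)/n` and replace `C` by the join of `C` with the new point. After `n + 1` steps `C` still
misses `a`, and the `n + 1` maximal sets met are pairwise transverse: the point used to leave
`hᵢ` lies in every later `hⱼ`, and `hᵢ ⊆ hⱼ` would force `hᵢ = hⱼ` by maximality. -/

lemma TransverseSets.symm {X : Type*} {h g : Set X} (hhg : TransverseSets h g) :
    TransverseSets g h :=
  let ⟨hg, hcg, hgc, hcgc⟩ := hhg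
  ⟨by rwa [Set.inter_comm], by rwa [Set.inter_comm], by rwa [Set.inter_comm],
    by rwa [Set.inter_comm]⟩

lemma sum_range_lt_of_forall_lt_div {f : ℕ → ℝ} {k n : ℕ} {D : ℝ} (hD : 0 < D) (hkn : k ≤ n)
    (hf : ∀ i < k, f i < D / n) : ∑ i ∈ Finset.range k, f i < D := by
  rcases k.eq_zero_or_pos with rfl | hk
  · simpa using hD
  have hn : (n : ℝ) ≠ 0 := by exact_mod_cast (hk.trans_le hkn).ne'
  calc ∑ i ∈ Finset.range k, f i < ∑ _i ∈ Finset.range k, D / n :=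
        Finset.sum_lt_sum_of_nonempty (Finset.nonempty_range_iff.2 hk.ne')
          fun i hi => hf i (Finset.mem_range.1 hi)
    _ = k * (D / n) := by simp
    _ ≤ n * (D / n) := by gcongr
    _ = D := mul_div_cancel₀ D hn

section MedianSpace

variable {X : Type*} [MetricSpace X]

section Interval

variable {a b c x y z : X}

lemma mem_mInterval : x ∈ mInterval a b ↔ dist a x + dist x b = dist a b := Iff.rfl

lemma left_mem_mInterval (a b : X) : a ∈ mInterval a b := by simp [mem_mInterval]

lemma right_mem_mInterval (a b : X) : b ∈ mInterval a b := by simp [mem_mInterval]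

lemma mem_mInterval_comm : x ∈ mInterval a b ↔ x ∈ mInterval b a := by
  simp only [mem_mInterval]
  rw [dist_comm a x, dist_comm x b, dist_comm a b, add_comm]

lemma mInterval_self (a : X) : mInterval a a = {a} := by
  ext x
  simp [mem_mInterval, dist_comm x a, eq_comm]

lemma mconvex_singleton (a : X) : MConvex ({a} : Set X) := by
  rintro x rfl y rfl
  rw [mInterval_self]

lemma mInterval_subset_left (hy : y ∈ mInterval a b) : mInterval a y ⊆ mInterval a b := by
  intro x hx
  rw [mem_mInterval] at hy hx ⊢
  linarith [dist_triangle x y b, dist_triangle a x b]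

lemma mInterval_subset_right (hy : y ∈ mInterval a b) : mInterval y b ⊆ mInterval a b := by
  intro x hx
  rw [mem_mInterval_comm] at hx ⊢
  exact mInterval_subset_left (mem_mInterval_comm.1 hy) hx

lemma mem_mInterval_of_mem_of_mem (hy : y ∈ mInterval x c) (hz : z ∈ mInterval y c) :
    y ∈ mInterval x z := by
  rw [mem_mInterval] at hy hz ⊢
  linarith [dist_triangle x z c, dist_triangle x y z]

end Interval

section Median

variable (hmed : IsMedianSpace X)

noncomputable def med (a b c : X) : X := (hmed a b c).choose

variable {a b c u x y z : X}

lemma med_mem_mInterval₁₂ (a b c : X) : med hmed a b c ∈ mInterval a b :=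
  (hmed a b c).choose_spec.1.1.1

lemma med_mem_mInterval₂₃ (a b c : X) : med hmed a b c ∈ mInterval b c :=
  (hmed a b c).choose_spec.1.1.2

lemma med_mem_mInterval₁₃ (a b c : X) : med hmed a b c ∈ mInterval a c :=
  (hmed a b c).choose_spec.1.2

lemma eq_med (h₁₂ : u ∈ mInterval a b) (h₂₃ : u ∈ mInterval b c) (h₁₃ : u ∈ mInterval a c) :
    u = med hmed a b c :=
  (hmed a b c).choose_spec.2 u ⟨⟨h₁₂, h₂₃⟩, h₁₃⟩

lemma med_eq_of_mem_mInterval (hb : b ∈ mInterval a c) : med hmed a b c = b :=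
  (eq_med hmed (right_mem_mInterval a b) (left_mem_mInterval b c) hb).symm

lemma mem_mInterval_med (hu₁ : u ∈ mInterval a z) (hu₂ : u ∈ mInterval z b) :
    u ∈ mInterval z (med hmed a z b) := by
  set q := med hmed a u b
  have hq₁ : q ∈ mInterval a u := med_mem_mInterval₁₂ hmed a u b
  have hqa : q ∈ mInterval a z := mInterval_subset_left hu₁ hq₁
  have hqb : q ∈ mInterval z b := mInterval_subset_right hu₂ (med_mem_mInterval₂₃ hmed a u b)
  rw [← eq_med hmed hqa hqb (med_mem_mInterval₁₃ hmed a u b), mem_mInterval]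
  rw [mem_mInterval] at hu₁ hq₁ hqa
  linarith [dist_comm z u, dist_comm u q, dist_comm z q]

lemma med_mem_mInterval_of_mem (c : X) (hz : z ∈ mInterval x y) :
    med hmed x c y ∈ mInterval z c := by
  set q := med hmed x z c
  set q' := med hmed y z c
  have hq : q ∈ mInterval x z := med_mem_mInterval₁₂ hmed x z c
  have hq' : q' ∈ mInterval y z := med_mem_mInterval₁₂ hmed y z c
  have hz' : z ∈ mInterval q q' := by
    rw [mem_mInterval] at hz hq hq' ⊢
    linarith [dist_triangle x q q', dist_triangle q' z y, dist_triangle q z q',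
      dist_triangle x q' y, dist_comm q' y, dist_comm z y, dist_comm q' z]
  set w := med hmed q c q'
  have hw : w ∈ mInterval q q' := med_mem_mInterval₁₃ hmed q c q'
  have hwxy : w ∈ mInterval x y := by
    rw [mem_mInterval] at hz hq hq' hz' hw ⊢
    linarith [dist_triangle x q w, dist_triangle w q' y, dist_triangle x w y,
      dist_comm y q', dist_comm q' z, dist_comm z y]
  have hwqc : w ∈ mInterval q c := med_mem_mInterval₁₂ hmed q c q'
  have hwxc : w ∈ mInterval x c :=
    mInterval_subset_right (med_mem_mInterval₁₃ hmed x z c) hwqc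
  have hwcy : w ∈ mInterval c y :=
    mInterval_subset_left (mem_mInterval_comm.1 (med_mem_mInterval₁₃ hmed y z c))
      (med_mem_mInterval₂₃ hmed q c q')
  rw [← eq_med hmed hwxc hwcy hwxy]
  exact mInterval_subset_right (med_mem_mInterval₂₃ hmed x z c) hwqc

end Median

section Join

def mJoin (x : X) (C : Set X) : Set X :=
  ⋃ c ∈ C, mInterval x c

variable {x z : X} {C : Set X}

lemma mem_mJoin : z ∈ mJoin x C ↔ ∃ c ∈ C, z ∈ mInterval x c := by
  simp [mJoin]

lemma subset_mJoin : C ⊆ mJoin x C :=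
  fun c hc => mem_mJoin.2 ⟨c, hc, right_mem_mInterval x c⟩

lemma mem_mJoin_self (hC : C.Nonempty) : x ∈ mJoin x C :=
  let ⟨c, hc⟩ := hC
  mem_mJoin.2 ⟨c, hc, left_mem_mInterval x c⟩

lemma dist_le_of_mem_mJoin {b : X} {r : ℝ} (hC : ∀ c ∈ C, dist b c ≤ r) (hz : z ∈ mJoin x C) :
    dist b z ≤ dist b x + r := by
  obtain ⟨c, hc, hzc⟩ := mem_mJoin.1 hz
  rw [mem_mInterval] at hzc
  linarith [hC c hc, dist_triangle b x z, dist_triangle b c z, dist_triangle x b c,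
    dist_comm c z, dist_comm x b]

lemma MConvex.mJoin (hmed : IsMedianSpace X) (hC : MConvex C) (x : X) :
    MConvex (mJoin x C) := by
  intro u hu v hv w hw
  obtain ⟨c₁, hc₁, hu₁⟩ := mem_mJoin.1 hu
  obtain ⟨c₂, hc₂, hv₂⟩ := mem_mJoin.1 hv
  set c := med hmed c₁ w c₂
  have hcC : c ∈ C := hC c₁ hc₁ c₂ hc₂ (med_mem_mInterval₁₃ hmed c₁ w c₂)
  set μ := med hmed x w c
  have hμw : μ ∈ mInterval w c := med_mem_mInterval₂₃ hmed x w c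
  -- by the gate property `μ` lies in `[w, u]` and `[w, v]`, so it is the median of `u, w, v`
  have hμu : μ ∈ mInterval w u :=
    mInterval_subset_left (mem_mInterval_comm.1 (med_mem_mInterval_of_mem hmed w hu₁))
      (mem_mInterval_med hmed (med_mem_mInterval₁₂ hmed x w c)
        (mInterval_subset_left (mem_mInterval_comm.1 (med_mem_mInterval₁₂ hmed c₁ w c₂)) hμw))
  have hμv : μ ∈ mInterval w v :=
    mInterval_subset_left (mem_mInterval_comm.1 (med_mem_mInterval_of_mem hmed w hv₂))
      (mem_mInterval_med hmed (med_mem_mInterval₁₂ hmed x w c)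
        (mInterval_subset_left (med_mem_mInterval₂₃ hmed c₁ w c₂) hμw))
  have hμ : μ = w := by
    rw [eq_med hmed (mem_mInterval_comm.1 hμu) hμv
      (mInterval_subset_left hw (mem_mInterval_comm.1 hμu)), med_eq_of_mem_mInterval hmed hw]
  rw [← hμ]
  exact mem_mJoin.2 ⟨c, hcC, med_mem_mInterval₁₃ hmed x w c⟩

end Join

section MaximalConvex

def IsConvexAvoiding (a : X) (g : Set X) : Prop :=
  MConvex g ∧ a ∉ g

variable {a x : X} {C h : Set X}

lemma exists_maximal_isConvexAvoiding (hC : MConvex C) (ha : a ∉ C) :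
    ∃ h, C ⊆ h ∧ Maximal (IsConvexAvoiding a) h := by
  refine zorn_subset_nonempty {g | IsConvexAvoiding a g} (fun c hcS hchain hcne => ?_) C ⟨hC, ha⟩
  refine ⟨⋃₀ c, ⟨?_, ?_⟩, fun s hs => Set.subset_sUnion_of_mem hs⟩
  · rintro u ⟨Du, hDu, huD⟩ v ⟨Dv, hDv, hvD⟩ w hw
    rcases hchain.total hDu hDv with h | h
    · exact ⟨Dv, hDv, (hcS hDv).1 u (h huD) v hvD hw⟩
    · exact ⟨Du, hDu, (hcS hDu).1 u huD v (h hvD) hw⟩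
  · rintro ⟨D, hD, haD⟩
    exact (hcS hD).2 haD

lemma Maximal.exists_mem_mInterval (hmed : IsMedianSpace X)
    (hmax : Maximal (IsConvexAvoiding a) h) (hne : h.Nonempty) (hx : x ∉ h) :
    ∃ c ∈ h, a ∈ mInterval x c := by
  by_contra! hcon
  have haJ : a ∉ mJoin x h := fun haJ =>
    let ⟨c, hc, hac⟩ := mem_mJoin.1 haJ
    hcon c hc hac
  exact hx (hmax.2 ⟨hmax.1.1.mJoin hmed x, haJ⟩ subset_mJoin (mem_mJoin_self hne))

lemma Maximal.isHalfspace (hmed : IsMedianSpace X)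
    (hmax : Maximal (IsConvexAvoiding a) h) (hne : h.Nonempty) : IsHalfspace h := by
  refine ⟨hmax.1.1, fun x hx y hy z hz hzh => ?_⟩
  obtain ⟨c₁, hc₁, hac₁⟩ := hmax.exists_mem_mInterval hmed hne hx
  obtain ⟨c₂, hc₂, hac₂⟩ := hmax.exists_mem_mInterval hmed hne hy
  set c := med hmed a c₁ c₂
  have hc : c ∈ h := hmax.1.1 c₁ hc₁ c₂ hc₂ (med_mem_mInterval₂₃ hmed a c₁ c₂)
  have haxc : a ∈ mInterval x c :=
    mem_mInterval_of_mem_of_mem hac₁ (med_mem_mInterval₁₂ hmed a c₁ c₂)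
  have hayc : a ∈ mInterval y c :=
    mem_mInterval_of_mem_of_mem hac₂ (med_mem_mInterval₁₃ hmed a c₁ c₂)
  have hacz : a ∈ mInterval c z :=
    mInterval_subset_left (mem_mInterval_comm.1 (med_mem_mInterval_of_mem hmed c hz))
      (mem_mInterval_med hmed haxc (mem_mInterval_comm.1 hayc))
  exact hmax.1.2 (hmax.1.1 c hc z hzh hacz)

lemma transverseSets_of_maximal {b x : X} {g : Set X}
    (hmax : Maximal (IsConvexAvoiding a) h) (hg : IsConvexAvoiding a g) (hbh : b ∈ h)
    (hbg : b ∈ g) (hxh : x ∉ h) (hxg : x ∈ g) : TransverseSets h g := by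
  refine ⟨⟨b, hbh, hbg⟩, ⟨x, hxh, hxg⟩, ?_, ⟨a, hmax.1.2, hg.2⟩⟩
  by_contra hempty
  have hsub : h ⊆ g := fun y hy => by_contra fun hy' => hempty ⟨y, hy, hy'⟩
  exact hxh (hmax.2 hg hsub hxg)

end MaximalConvex

section NearestPoint

open Filter Topology Metric

variable {K : Set X} {z : X}

lemma MConvex.closure (hmed : IsMedianSpace X) (hK : MConvex K) : MConvex (closure K) := by
  intro u hu v hv w hw
  rw [Metric.mem_closure_iff]
  intro ε hε
  obtain ⟨u', hu'K, hu'⟩ := Metric.mem_closure_iff.1 hu (ε / 4) (by linarith)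
  obtain ⟨v', hv'K, hv'⟩ := Metric.mem_closure_iff.1 hv (ε / 4) (by linarith)
  set m := med hmed u' w v'
  have hm₁ : m ∈ mInterval u' w := med_mem_mInterval₁₂ hmed u' w v'
  have hm₂ : m ∈ mInterval w v' := med_mem_mInterval₂₃ hmed u' w v'
  have hm₃ : m ∈ mInterval u' v' := med_mem_mInterval₁₃ hmed u' w v'
  refine ⟨m, hK u' hu'K v' hv'K hm₃, ?_⟩
  rw [mem_mInterval] at hw hm₁ hm₂ hm₃
  linarith [dist_triangle u' u w, dist_triangle w v v', dist_triangle u u' v,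
    dist_triangle u' v' v, dist_comm u' u, dist_comm v v', dist_comm m w]

lemma MConvex.dist_le (hmed : IsMedianSpace X) (hK : MConvex K) {w₁ w₂ : X}
    (hw₁ : w₁ ∈ K) (hw₂ : w₂ ∈ K) :
    dist w₁ w₂ ≤ dist z w₁ - infDist z K + (dist z w₂ - infDist z K) := by
  set m := med hmed w₁ z w₂
  have hm₁ : m ∈ mInterval w₁ z := med_mem_mInterval₁₂ hmed w₁ z w₂
  have hm₂ : m ∈ mInterval z w₂ := med_mem_mInterval₂₃ hmed w₁ z w₂
  have hmK : m ∈ K := hK w₁ hw₁ w₂ hw₂ (med_mem_mInterval₁₃ hmed w₁ z w₂)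
  rw [mem_mInterval] at hm₁ hm₂
  linarith [infDist_le_dist_of_mem (x := z) hmK, dist_triangle w₁ m w₂, dist_comm m z,
    dist_comm w₁ z]

lemma MConvex.exists_dist_eq_infDist (hmed : IsMedianSpace X) [CompleteSpace X]
    (hK : MConvex K) (hKc : IsClosed K) (hKne : K.Nonempty) (z : X) :
    ∃ p ∈ K, dist z p = infDist z K := by
  set δ := infDist z K
  have hε : Tendsto (fun k : ℕ => 1 / ((k : ℝ) + 1)) atTop (𝓝 0) :=
    tendsto_one_div_add_atTop_nhds_zero_nat
  have hw : ∀ k : ℕ, ∃ w ∈ K, dist z w < δ + 1 / (k + 1) := fun k =>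
    (infDist_lt_iff hKne).1 (lt_add_of_pos_right δ (by positivity))
  choose w hwK hwz using hw
  have hcauchy : CauchySeq w := by
    refine cauchySeq_of_le_tendsto_0' (fun k => 2 * (1 / ((k : ℝ) + 1))) (fun j k hjk => ?_)
      (by simpa using hε.const_mul 2)
    have hkj : 1 / ((k : ℝ) + 1) ≤ 1 / (j + 1) := by gcongr
    linarith [hK.dist_le hmed (z := z) (hwK j) (hwK k), hwz j, hwz k]
  obtain ⟨p, hp⟩ := cauchySeq_tendsto_of_complete hcauchy
  have hlim : Tendsto (fun k => dist z (w k)) atTop (𝓝 δ) :=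
    tendsto_of_tendsto_of_tendsto_of_le_of_le tendsto_const_nhds
      (by simpa using hε.const_add δ) (fun k => infDist_le_dist_of_mem (hwK k))
      (fun k => (hwz k).le)
  exact ⟨p, hKc.mem_of_tendsto hp (Eventually.of_forall hwK),
    tendsto_nhds_unique (tendsto_const_nhds.dist hp) hlim⟩

lemma MConvex.mem_mInterval_of_dist_eq_infDist (hmed : IsMedianSpace X) (hK : MConvex K)
    {p c : X} (hp : p ∈ K) (hzp : dist z p = infDist z K) (hc : c ∈ K) :
    p ∈ mInterval z c := by
  set m := med hmed z p c
  have hm : m ∈ mInterval z p := med_mem_mInterval₁₂ hmed z p c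
  have hmK : m ∈ K := hK p hp c hc (med_mem_mInterval₂₃ hmed z p c)
  have hmp : dist m p = 0 := by
    rw [mem_mInterval] at hm
    linarith [infDist_le_dist_of_mem (x := z) hmK, dist_nonneg (x := m) (y := p)]
  rw [← dist_eq_zero.1 hmp]
  exact med_mem_mInterval₁₃ hmed z p c

end NearestPoint

/- With `p` the nearest point to `a` in `closure h`, the function `t ↦ d(t, p) - d(t, a)` equals
`-d(a, p)` on `h` and is at least `d(a, p)` off `h`; by connectedness it vanishes somewhere. -/
lemma Maximal.infDist_eq_zero (hmed : IsMedianSpace X) [CompleteSpace X] [ConnectedSpace X]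
    {a : X} {h : Set X} (hmax : Maximal (IsConvexAvoiding a) h) (hne : h.Nonempty) :
    Metric.infDist a h = 0 := by
  set δ := Metric.infDist a h
  have hK : MConvex (closure h) := hmax.1.1.closure hmed
  obtain ⟨p, hp, hap⟩ := hK.exists_dist_eq_infDist hmed isClosed_closure hne.closure a
  rw [Metric.infDist_closure] at hap
  have hgate : ∀ c ∈ h, dist a p + dist p c = dist a c := fun c hc =>
    hK.mem_mInterval_of_dist_eq_infDist hmed hp (by rwa [Metric.infDist_closure])
      (subset_closure hc)
  set f : X → ℝ := fun t => dist t p - dist t a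
  have hf_in : ∀ c ∈ h, f c = -δ := fun c hc => by
    simp only [f, dist_comm c]
    linarith [hgate c hc]
  have hf_out : ∀ x ∉ h, δ ≤ f x := fun x hx => by
    obtain ⟨c, hc, hac⟩ := hmax.exists_mem_mInterval hmed hne hx
    rw [mem_mInterval] at hac
    simp only [f]
    linarith [hgate c hc, dist_triangle x p c]
  obtain ⟨b, hb⟩ := hne
  obtain ⟨x, hx⟩ := intermediate_value_univ b a
    ((continuous_id.dist continuous_const).sub (continuous_id.dist continuous_const))
    (show (0 : ℝ) ∈ Set.Icc (f b) (f a) from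
      ⟨by linarith [hf_in b hb, Metric.infDist_nonneg (x := a) (s := h)],
        by simp [f, hap, Metric.infDist_nonneg]⟩)
  have hfx : f x = 0 := hx
  by_cases hxh : x ∈ h
  · linarith [hf_in x hxh]
  · linarith [hf_out x hxh, Metric.infDist_nonneg (x := a) (s := h)]

section IteratedJoin

def iterJoin (b : X) (Y : Set X → X) : ℕ → Set X
  | 0 => {b}
  | k + 1 => mJoin (Y (iterJoin b Y k)) (iterJoin b Y k)

variable {b : X} {Y : Set X → X}

lemma iterJoin_mono : Monotone (iterJoin b Y) :=
  monotone_nat_of_le_succ fun _ => subset_mJoin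

lemma mem_iterJoin (k : ℕ) : b ∈ iterJoin b Y k :=
  iterJoin_mono (Nat.zero_le k) rfl

lemma mem_iterJoin_succ (k : ℕ) : Y (iterJoin b Y k) ∈ iterJoin b Y (k + 1) :=
  mem_mJoin_self ⟨b, mem_iterJoin k⟩

lemma MConvex.iterJoin (hmed : IsMedianSpace X) (k : ℕ) : MConvex (iterJoin b Y k) := by
  induction k with
  | zero => exact mconvex_singleton b
  | succ k ih => exact ih.mJoin hmed _

lemma dist_le_of_mem_iterJoin {k : ℕ} {z : X} (hz : z ∈ iterJoin b Y k) :
    dist b z ≤ ∑ i ∈ Finset.range k, dist b (Y (iterJoin b Y i)) := by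
  induction k generalizing z with
  | zero => simp_all [iterJoin]
  | succ k ih =>
    rw [Finset.sum_range_succ, add_comm]
    exact dist_le_of_mem_mJoin (fun c hc => ih hc) hz

end IteratedJoin

theorem exists_transverse_halfspaces (hmed : IsMedianSpace X) [CompleteSpace X]
    [ConnectedSpace X] {a b : X} (hab : a ≠ b) (n : ℕ)
    (hshallow : ∀ h : Set X, IsHalfspace h → b ∈ h → a ∉ h → Metric.infDist a h = 0 →
      Metric.infDist b hᶜ < dist a b / n) :
    ∃ h : Fin (n + 1) → Set X, (∀ i, IsHalfspace (h i)) ∧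
      ∀ i j, i ≠ j → TransverseSets (h i) (h j) := by
  have step : ∀ C : Set X, MConvex C → b ∈ C → a ∉ C → ∃ (h : Set X) (x : X),
      C ⊆ h ∧ Maximal (IsConvexAvoiding a) h ∧ x ∉ h ∧ dist b x < dist a b / n := by
    intro C hC hbC haC
    obtain ⟨h, hCh, hmax⟩ := exists_maximal_isConvexAvoiding hC haC
    have hne : h.Nonempty := ⟨b, hCh hbC⟩
    obtain ⟨x, hx, hbx⟩ := (Metric.infDist_lt_iff ⟨a, hmax.1.2⟩).1 <|
      hshallow h (hmax.isHalfspace hmed hne) (hCh hbC) hmax.1.2 (hmax.infDist_eq_zero hmed hne)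
    exact ⟨h, x, hCh, hmax, hx, hbx⟩
  have : Nonempty X := ⟨a⟩
  choose! H Y hHY using step
  set C := iterJoin b Y
  have hstep : ∀ k, a ∉ C k → C k ⊆ H (C k) ∧ Maximal (IsConvexAvoiding a) (H (C k)) ∧
      Y (C k) ∉ H (C k) ∧ dist b (Y (C k)) < dist a b / n := fun k =>
    hHY (C k) (MConvex.iterJoin hmed k) (mem_iterJoin k)
  have hfar : ∀ k ≤ n, a ∉ C k := by
    intro k
    induction k using Nat.strong_induction_on with
    | _ k ih =>
      intro hkn haC
      have hsum := sum_range_lt_of_forall_lt_div (dist_pos.2 hab) hkn fun i hi =>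
        (hstep i (ih i hi (by omega))).2.2.2
      linarith [dist_le_of_mem_iterJoin haC, dist_comm a b]
  have hchain : ∀ i j : Fin (n + 1), i < j → TransverseSets (H (C i)) (H (C j)) := by
    intro i j hij
    obtain ⟨hCi, hmaxi, hYi, -⟩ := hstep i (hfar i (Nat.lt_succ_iff.1 i.isLt))
    obtain ⟨hCj, hmaxj, -, -⟩ := hstep j (hfar j (Nat.lt_succ_iff.1 j.isLt))
    exact transverseSets_of_maximal hmaxi hmaxj.1 (hCi (mem_iterJoin i)) (hCj (mem_iterJoin j))
      hYi (hCj (iterJoin_mono (Nat.succ_le_of_lt hij) (mem_iterJoin_succ i)))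
  refine ⟨fun i => H (C i), fun i => ?_, fun i j hij => ?_⟩
  · obtain ⟨hCi, hmaxi, -, -⟩ := hstep i (hfar i (Nat.lt_succ_iff.1 i.isLt))
    exact hmaxi.isHalfspace hmed ⟨b, hCi (mem_iterJoin i)⟩
  · rcases hij.lt_or_gt with hij | hji
    · exact hchain i j hij
    · exact (hchain j i hji).symm

end MedianSpace

/-- In a complete connected median space of rank `n`, any two distinct points `a ≠ b` are
separated by a halfspace `h` with `b ∈ h`, `a ∈ hᶜ`, `d(a,h) = 0` and `d(b,hᶜ) ≥ d(a,b)/n`. -/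
theorem statement4 (X : Type*) [MetricSpace X] [CompleteSpace X] [ConnectedSpace X]
    (hmed : IsMedianSpace X) (n : ℕ) (hrank : HasMedianRank X n)
    (a b : X) (hab : a ≠ b) :
    ∃ h : Set X, IsHalfspace h ∧ b ∈ h ∧ a ∈ hᶜ ∧ Metric.infDist a h = 0 ∧
      dist a b / n ≤ Metric.infDist b hᶜ := by
  by_contra! hshallow
  exact hrank.2 (exists_transverse_halfspaces hmed hab n hshallow)
end

section
/- Let X be a complete connected median space of finite rank, let x₀ ∈ X, let g be a surjective isometry of X with g(x₀) = x₀, and let h be a closed halfspace of X with x₀ ∈ hᶜ. If g(h) ⊆ h then g(h) = h; consequently the halfspaces h and g(h) are either equal, transverse, or disjoint. -/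
/-!
Let `p` be the point of `h` nearest to `x₀`. In a median space the median `m` of `p`, `y`, `x₀`
lies in `h` for every `y ∈ h` and satisfies `d(x₀, m) ≤ d(x₀, p)`, so `m = p`: the nearest point
exists (by completeness), is unique, and is a gate, `p ∈ [x₀, y]`. Since `g` fixes `x₀` and maps
`h` into itself, `g p` is also nearest, so `g p = p`. If some `y ∈ h` were outside `g(h)`, the
convex set `g(h)ᶜ` would contain `x₀` and `y`, hence `p = g p ∈ g(h)`, a contradiction.
Applying this to `g` and `g⁻¹` leaves, among the four intersections of `h`, `g(h)` and their
complements, only the possibilities equal, transverse or disjoint, since `x₀ ∈ hᶜ ∩ g(h)ᶜ`.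
-/

open Metric Set Filter Topology

section Median

variable {X : Type*} [MetricSpace X] {C : Set X}

theorem IsMedianSpace.dist_add_two_mul_infDist_le (hX : IsMedianSpace X) (hC : MConvex C)
    {p q : X} (hp : p ∈ C) (hq : q ∈ C) (x : X) :
    dist p q + 2 * infDist x C ≤ dist x p + dist x q := by
  obtain ⟨m, ⟨⟨hm_pq, hm_qx⟩, hm_px⟩, -⟩ := hX p q x
  have hmx : infDist x C ≤ dist x m := infDist_le_dist_of_mem (hC p hp q hq hm_pq)
  have hqx : dist q m + dist m x = dist q x := hm_qx
  have hpx : dist p m + dist m x = dist p x := hm_px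
  have := dist_triangle p m q
  simp only [dist_comm] at *
  linarith

theorem IsMedianSpace.mem_mInterval_of_dist_eq_infDist (hX : IsMedianSpace X) (hC : MConvex C)
    {x p y : X} (hp : p ∈ C) (hpx : dist x p = infDist x C) (hy : y ∈ C) :
    p ∈ mInterval x y := by
  have := hX.dist_add_two_mul_infDist_le hC hp hy x
  exact le_antisymm (by linarith) (dist_triangle x p y)

theorem IsMedianSpace.eq_of_dist_eq_infDist (hX : IsMedianSpace X) (hC : MConvex C)
    {x p q : X} (hp : p ∈ C) (hq : q ∈ C) (hpx : dist x p = infDist x C)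
    (hqx : dist x q = infDist x C) : p = q := by
  have := hX.dist_add_two_mul_infDist_le hC hp hq x
  exact dist_le_zero.mp (by linarith)

theorem IsMedianSpace.exists_dist_eq_infDist [CompleteSpace X] (hX : IsMedianSpace X)
    (hC : MConvex C) (hcl : IsClosed C) (hne : C.Nonempty) (x : X) :
    ∃ p ∈ C, dist x p = infDist x C := by
  set r := infDist x C
  have hε : ∀ n : ℕ, r < r + 1 / (n + 1) := fun n => lt_add_of_pos_right r Nat.one_div_pos_of_nat
  choose u huC hux using fun n => (infDist_lt_iff hne).mp (hε n)
  have hr : Tendsto (fun n : ℕ => r + 1 / (n + 1)) atTop (𝓝 r) := by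
    simpa using tendsto_one_div_add_atTop_nhds_zero_nat.const_add r
  -- the minimizing sequence is Cauchy because nearly nearest points are close to each other
  have hu : CauchySeq u := by
    refine cauchySeq_of_le_tendsto_0 (fun N : ℕ => 2 * (1 / (N + 1))) (fun m n N hm hn => ?_)
      (by simpa using (tendsto_one_div_add_atTop_nhds_zero_nat (𝕜 := ℝ)).const_mul 2)
    have := hX.dist_add_two_mul_infDist_le hC (huC m) (huC n) x
    have := hux m; have := hux n
    have : (1 : ℝ) / (m + 1) ≤ 1 / (N + 1) := Nat.one_div_le_one_div hm
    have : (1 : ℝ) / (n + 1) ≤ 1 / (N + 1) := Nat.one_div_le_one_div hn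
    linarith
  obtain ⟨p, hp⟩ := cauchySeq_tendsto_of_complete hu
  have hpC : p ∈ C := hcl.mem_of_tendsto hp (Eventually.of_forall huC)
  refine ⟨p, hpC, le_antisymm ?_ (infDist_le_dist_of_mem hpC)⟩
  exact le_of_tendsto_of_tendsto' (tendsto_const_nhds.dist hp) hr fun n => (hux n).le

end Median

section Isometry

variable {X Y : Type*} [MetricSpace X] [MetricSpace Y]

theorem IsometryEquiv.image_mInterval (e : X ≃ᵢ Y) (a b : X) :
    e '' mInterval a b = mInterval (e a) (e b) := by
  ext z
  obtain ⟨w, rfl⟩ := e.surjective z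
  simp [mInterval, e.injective.mem_set_image, e.dist_eq]

theorem MConvex.image_isometryEquiv {C : Set X} (hC : MConvex C) (e : X ≃ᵢ Y) :
    MConvex (e '' C) := by
  rintro _ ⟨a, ha, rfl⟩ _ ⟨b, hb, rfl⟩
  rw [← e.image_mInterval]
  exact image_mono (hC a ha b hb)

variable [CompleteSpace X]

theorem IsMedianSpace.image_eq_of_image_subset (hX : IsMedianSpace X) (e : X ≃ᵢ X) {x₀ : X}
    (he : e x₀ = x₀) {h : Set X} (hh : IsHalfspace h) (hcl : IsClosed h) (hx₀ : x₀ ∉ h)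
    (hsub : e '' h ⊆ h) : e '' h = h := by
  rcases h.eq_empty_or_nonempty with rfl | hne
  · simp
  obtain ⟨p, hp, hpx⟩ := hX.exists_dist_eq_infDist hh.1 hcl hne x₀
  have hep : e p = p := hX.eq_of_dist_eq_infDist hh.1 (hsub (mem_image_of_mem e hp)) hp
    (by rw [← he, e.dist_eq, hpx, he]) hpx
  refine hsub.antisymm fun y hy => by_contra fun hy' => ?_
  have hcompl : MConvex (e '' h)ᶜ := by
    rw [← image_compl_eq e.bijective]
    exact hh.2.image_isometryEquiv e
  exact hcompl x₀ (fun hx => hx₀ (hsub hx)) y hy'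
    (hX.mem_mInterval_of_dist_eq_infDist hh.1 hp hpx hy) ⟨p, hp, hep⟩

theorem IsMedianSpace.image_eq_of_subset_image (hX : IsMedianSpace X) (e : X ≃ᵢ X) {x₀ : X}
    (he : e x₀ = x₀) {h : Set X} (hh : IsHalfspace h) (hcl : IsClosed h) (hx₀ : x₀ ∉ h)
    (hsub : h ⊆ e '' h) : e '' h = h := by
  have he' : e.symm x₀ = x₀ := e.symm_apply_eq.mpr he.symm
  have hsub' : e.symm '' h ⊆ h := image_subset_iff.mpr (by rwa [e.preimage_symm])
  have hpre : e ⁻¹' h = h := by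
    rw [← e.image_symm]
    exact hX.image_eq_of_image_subset e.symm he' hh hcl hx₀ hsub'
  calc e '' h = e '' (e ⁻¹' h) := by rw [hpre]
    _ = h := image_preimage_eq h e.surjective

end Isometry

theorem eq_or_transverseSets_or_disjoint {α : Type*} {s t : Set α} {x : α} (hxs : x ∉ s)
    (hxt : x ∉ t) (hts : t ⊆ s → t = s) (hst : s ⊆ t → t = s) :
    t = s ∨ TransverseSets s t ∨ Disjoint s t := by
  rcases (s ∩ t).eq_empty_or_nonempty with hempty | hinter
  · exact Or.inr (Or.inr (disjoint_iff_inter_eq_empty.mpr hempty))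
  by_cases htdiff : (sᶜ ∩ t).Nonempty
  · by_cases hsdiff : (s ∩ tᶜ).Nonempty
    · exact Or.inr (Or.inl ⟨hinter, htdiff, hsdiff, x, hxs, hxt⟩)
    · exact Or.inl (hst fun y hy => by_contra fun hyt => hsdiff ⟨y, hy, hyt⟩)
  · exact Or.inl (hts fun y hy => by_contra fun hys => htdiff ⟨y, hys, hy⟩)

theorem statement18_general (X : Type*) [MetricSpace X] [CompleteSpace X]
    (hmed : IsMedianSpace X)
    (x₀ : X) (g : X → X) (hg : Isometry g) (hgs : Function.Surjective g)
    (hgx₀ : g x₀ = x₀)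
    (h : Set X) (hh : IsHalfspace h) (hcl : IsClosed h) (hx₀ : x₀ ∈ hᶜ) :
    (g '' h ⊆ h → g '' h = h) ∧
    (g '' h = h ∨ TransverseSets h (g '' h) ∨ Disjoint h (g '' h)) := by
  let e : X ≃ᵢ X := .mk' g (Function.surjInv hgs) (Function.rightInverse_surjInv hgs) hg
  have hx₀g : x₀ ∉ g '' h := fun ⟨y, hy, hyx⟩ => hx₀ (hg.injective (hyx.trans hgx₀.symm) ▸ hy)
  exact ⟨hmed.image_eq_of_image_subset e hgx₀ hh hcl hx₀,
    eq_or_transverseSets_or_disjoint hx₀ hx₀g (hmed.image_eq_of_image_subset e hgx₀ hh hcl hx₀)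
      (hmed.image_eq_of_subset_image e hgx₀ hh hcl hx₀)⟩

/-- In a complete connected median space of finite rank, if `g` is a surjective isometry
fixing `x₀` and `h` is a closed halfspace with `x₀ ∈ hᶜ`, then `g(h) ⊆ h` implies
`g(h) = h`; consequently `h` and `g(h)` are equal, transverse, or disjoint. -/
theorem statement18 (X : Type*) [MetricSpace X] [CompleteSpace X] [ConnectedSpace X]
    (hmed : IsMedianSpace X) (hrank : ∃ n : ℕ, HasMedianRank X n)
    (x₀ : X) (g : X → X) (hg : Isometry g) (hgs : Function.Surjective g)
    (hgx₀ : g x₀ = x₀)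
    (h : Set X) (hh : IsHalfspace h) (hcl : IsClosed h) (hx₀ : x₀ ∈ hᶜ) :
    (g '' h ⊆ h → g '' h = h) ∧
    (g '' h = h ∨ TransverseSets h (g '' h) ∨ Disjoint h (g '' h)) :=
  statement18_general X hmed x₀ g hg hgs hgx₀ h hh hcl hx₀
end
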